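/- For H = (px²+py²+pz²)/2 + k1/r + k2/x² + k3/y² + k4/z², k2 ≥ 0, the quartic function K_4x = R_x² + (2k2/x²)·(x·px + y·py + z·pz)², with R_x = (z·px−x·pz)·pz − (x·py−y·px)·py − x·(k1/r + 2k2/x² + 2k3/y² + 2k4/z²), satisfies {K_4x, H} = 0. -/

import Mathlib

noncomputable section

/-- Phase space ℝ⁶ with coordinates (x,y,z,px,py,pz). -/
abbrev Pt := Fin 6 → ℝ

/-- Standard basis vector. -/
def e (j : Fin 6) : Pt := Pi.single j 1

/-- Canonical Poisson bracket on ℝ⁶: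
{F,G} = Σᵢ (∂F/∂qᵢ ∂G/∂pᵢ − ∂F/∂pᵢ ∂G/∂qᵢ). -/
def pb (F G : Pt → ℝ) (q : Pt) : ℝ :=
    (fderiv ℝ F q (e 0)) * (fderiv ℝ G q (e 3)) - (fderiv ℝ F q (e 3)) * (fderiv ℝ G q (e 0))
  + (fderiv ℝ F q (e 1)) * (fderiv ℝ G q (e 4)) - (fderiv ℝ F q (e 4)) * (fderiv ℝ G q (e 1))
  + (fderiv ℝ F q (e 2)) * (fderiv ℝ G q (e 5)) - (fderiv ℝ F q (e 5)) * (fderiv ℝ G q (e 2))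

/-- H = (px²+py²+pz²)/2 + k1/r + k2/x² + k3/y² + k4/z², r = √(x²+y²+z²). -/
def Ham (k1 k2 k3 k4 : ℝ) (q : Pt) : ℝ :=
  (q 3 ^ 2 + q 4 ^ 2 + q 5 ^ 2) / 2 + k1 / Real.sqrt (q 0 ^ 2 + q 1 ^ 2 + q 2 ^ 2)
    + k2 / q 0 ^ 2 + k3 / q 1 ^ 2 + k4 / q 2 ^ 2

/-- R_x = (J2 pz − J3 py) − x·(k1/r + 2k2/x² + 2k3/y² + 2k4/z²),
with J2 = z px − x pz, J3 = x py − y px. -/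
def Rx (k1 k2 k3 k4 : ℝ) (q : Pt) : ℝ :=
  ((q 2 * q 3 - q 0 * q 5) * q 5 - (q 0 * q 4 - q 1 * q 3) * q 4)
    - q 0 * (k1 / Real.sqrt (q 0 ^ 2 + q 1 ^ 2 + q 2 ^ 2)
        + 2 * k2 / q 0 ^ 2 + 2 * k3 / q 1 ^ 2 + 2 * k4 / q 2 ^ 2)

/-- K_4x = R_x² + (2k2/x²)(x px + y py + z pz)². -/
def K4x (k1 k2 k3 k4 : ℝ) (q : Pt) : ℝ :=
  (Rx k1 k2 k3 k4 q) ^ 2 + (2 * k2 / q 0 ^ 2) * (q 0 * q 3 + q 1 * q 4 + q 2 * q 5) ^ 2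

/-!
Write `D = x px + y py + z pz`. Since `{·, H}` is a derivation, `{K_4x, H}` expands into
`2 R_x {R_x, H} + (2k2/x²) · 2D {D, H} + D² {2k2/x², H}`, and the three brackets are
`{R_x, H} = 2k2 D/x³`, `{2k2/x², H} = -4k2 px/x³` and `{D, H} = |p|² + k1/r + 2k2/x² + 2k3/y² + 2k4/z²`.
The last one makes `R_x = px D - x {D, H}`, and with it the expansion equals
`(4k2 D/x³) (R_x - px D + x {D, H}) = 0`.
-/

open ContinuousLinearMap

def radius (q : Pt) : ℝ := √(q 0 ^ 2 + q 1 ^ 2 + q 2 ^ 2)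

theorem radius_sq (q : Pt) : radius q ^ 2 = q 0 ^ 2 + q 1 ^ 2 + q 2 ^ 2 :=
  Real.sq_sqrt (by positivity)

theorem radius_ne_zero {q : Pt} (hx : q 0 ≠ 0) : radius q ≠ 0 :=
  (Real.sqrt_pos.2 (by positivity)).ne'

theorem hasFDerivAt_const_div_sq_apply {ι : Type*} [Fintype ι] (c : ℝ) (i : ι) {q : ι → ℝ}
    (h : q i ≠ 0) :
    HasFDerivAt (fun p : ι → ℝ => c / p i ^ 2)
      ((-2 * c / q i ^ 3) • (proj i : (ι → ℝ) →L[ℝ] ℝ)) q := by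
  have h1 : HasDerivAt (fun t : ℝ => c / t ^ 2) (-2 * c / q i ^ 3) (q i) := by
    refine ((hasDerivAt_const (q i) c).div (hasDerivAt_pow 2 (q i)) (pow_ne_zero 2 h)).congr_deriv ?_
    field_simp
    ring
  exact h1.comp_hasFDerivAt (h₂ := fun t => c / t ^ 2) q (hasFDerivAt_apply i q)

theorem hasFDerivAt_const_div_radius (c : ℝ) {q : Pt} (hr : radius q ≠ 0) :
    HasFDerivAt (fun p => c / radius p)
      ((-c / radius q ^ 3) • (q 0 • proj 0 + q 1 • proj 1 + q 2 • proj 2 : Pt →L[ℝ] ℝ)) q := by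
  have hr₀ : 0 ≤ radius q := Real.sqrt_nonneg _
  have hs : HasFDerivAt (fun p : Pt => p 0 ^ 2 + p 1 ^ 2 + p 2 ^ 2)
      ((2 : ℝ) • (q 0 • proj 0 + q 1 • proj 1 + q 2 • proj 2 : Pt →L[ℝ] ℝ)) q := by
    refine ((((hasFDerivAt_apply 0 q).pow 2).add ((hasFDerivAt_apply 1 q).pow 2)).add
      ((hasFDerivAt_apply 2 q).pow 2)).congr_fderiv ?_
    ext v
    simp only [add_apply, smul_apply, proj_apply, smul_eq_mul]
    ring
  have h1 : HasDerivAt (fun s : ℝ => c / √s) (-c / radius q ^ 3 / 2)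
      (q 0 ^ 2 + q 1 ^ 2 + q 2 ^ 2) := by
    rw [← radius_sq]
    refine ((hasDerivAt_const _ c).div (Real.hasDerivAt_sqrt (by positivity))
      (by rwa [Real.sqrt_sq hr₀])).congr_deriv ?_
    rw [Real.sqrt_sq hr₀]
    field_simp
    ring
  refine (h1.comp_hasFDerivAt (h₂ := fun s => c / √s) q hs).congr_fderiv ?_
  ext v
  simp only [add_apply, smul_apply, proj_apply, smul_eq_mul]
  ring

def symplecticGradient (G : Pt → ℝ) (q : Pt) : Pt :=
  ![fderiv ℝ G q (e 3), fderiv ℝ G q (e 4), fderiv ℝ G q (e 5),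
    -fderiv ℝ G q (e 0), -fderiv ℝ G q (e 1), -fderiv ℝ G q (e 2)]

theorem pb_eq_fderiv_symplecticGradient (F G : Pt → ℝ) (q : Pt) :
    pb F G q = fderiv ℝ F q (symplecticGradient G q) := by
  set g := fderiv ℝ G q
  have hv : symplecticGradient G q = g (e 3) • e 0 + g (e 4) • e 1 + g (e 5) • e 2
      - g (e 0) • e 3 - g (e 1) • e 4 - g (e 2) • e 5 := by
    ext i
    fin_cases i <;> simp [symplecticGradient, e, g]
  rw [hv, pb]
  simp only [map_add, map_sub, map_smul, smul_eq_mul, g]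
  ring

section Leibniz

variable {F G H : Pt → ℝ} {q : Pt}

theorem pb_add (hF : DifferentiableAt ℝ F q) (hG : DifferentiableAt ℝ G q) :
    pb (fun p => F p + G p) H q = pb F H q + pb G H q := by
  simp only [pb_eq_fderiv_symplecticGradient, fderiv_fun_add hF hG, add_apply]

theorem pb_mul (hF : DifferentiableAt ℝ F q) (hG : DifferentiableAt ℝ G q) :
    pb (fun p => F p * G p) H q = F q * pb G H q + G q * pb F H q := by
  simp only [pb_eq_fderiv_symplecticGradient, fderiv_fun_mul hF hG, add_apply, smul_apply,
    smul_eq_mul]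

theorem pb_sq (hF : DifferentiableAt ℝ F q) :
    pb (fun p => F p ^ 2) H q = 2 * F q * pb F H q := by
  simp only [sq, pb_mul hF hF]
  ring

end Leibniz

def hamVectorField (k1 k2 k3 k4 : ℝ) (q : Pt) : Pt :=
  ![q 3, q 4, q 5,
    k1 * q 0 / radius q ^ 3 + 2 * k2 / q 0 ^ 3,
    k1 * q 1 / radius q ^ 3 + 2 * k3 / q 1 ^ 3,
    k1 * q 2 / radius q ^ 3 + 2 * k4 / q 2 ^ 3]

theorem symplecticGradient_Ham (k1 k2 k3 k4 : ℝ) {q : Pt} (hx : q 0 ≠ 0) (hy : q 1 ≠ 0)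
    (hz : q 2 ≠ 0) :
    symplecticGradient (Ham k1 k2 k3 k4) q = hamVectorField k1 k2 k3 k4 q := by
  have hT : HasFDerivAt (fun p : Pt => (p 3 ^ 2 + p 4 ^ 2 + p 5 ^ 2) / 2)
      (q 3 • proj 3 + q 4 • proj 4 + q 5 • proj 5 : Pt →L[ℝ] ℝ) q := by
    refine (((((hasFDerivAt_apply 3 q).pow 2).add ((hasFDerivAt_apply 4 q).pow 2)).add
      ((hasFDerivAt_apply 5 q).pow 2)).mul_const (2⁻¹ : ℝ)).congr_fderiv ?_
    ext v
    simp only [add_apply, smul_apply, proj_apply, smul_eq_mul, nsmul_eq_mul]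
    ring
  have hH : HasFDerivAt (Ham k1 k2 k3 k4) _ q :=
    (((hT.add (hasFDerivAt_const_div_radius k1 (radius_ne_zero hx))).add
      (hasFDerivAt_const_div_sq_apply k2 0 hx)).add
      (hasFDerivAt_const_div_sq_apply k3 1 hy)).add (hasFDerivAt_const_div_sq_apply k4 2 hz)
  rw [symplecticGradient, hH.fderiv]
  ext i
  fin_cases i <;>
    simp only [hamVectorField, e, add_apply, smul_apply, proj_apply, smul_eq_mul, Pi.single_apply,
      Fin.isValue, Fin.reduceFinMk, Fin.zero_eta, Fin.mk_one, Matrix.cons_val, Matrix.cons_val_zero,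
      Matrix.cons_val_one, Fin.reduceEq, if_true, if_false] <;> ring

theorem pb_Ham_eq_fderiv (F : Pt → ℝ) (k1 k2 k3 k4 : ℝ) {q : Pt} (hx : q 0 ≠ 0) (hy : q 1 ≠ 0)
    (hz : q 2 ≠ 0) :
    pb F (Ham k1 k2 k3 k4) q = fderiv ℝ F q (hamVectorField k1 k2 k3 k4 q) := by
  rw [pb_eq_fderiv_symplecticGradient, symplecticGradient_Ham k1 k2 k3 k4 hx hy hz]

def dilation (q : Pt) : ℝ := q 0 * q 3 + q 1 * q 4 + q 2 * q 5

theorem pb_dilation_Ham (k1 k2 k3 k4 : ℝ) {q : Pt} (hx : q 0 ≠ 0) (hy : q 1 ≠ 0)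
    (hz : q 2 ≠ 0) :
    pb dilation (Ham k1 k2 k3 k4) q = q 3 ^ 2 + q 4 ^ 2 + q 5 ^ 2
      + (k1 / radius q + 2 * k2 / q 0 ^ 2 + 2 * k3 / q 1 ^ 2 + 2 * k4 / q 2 ^ 2) := by
  have hD : HasFDerivAt dilation _ q :=
    (((hasFDerivAt_apply (𝕜 := ℝ) 0 q).mul (hasFDerivAt_apply 3 q)).add
      ((hasFDerivAt_apply (𝕜 := ℝ) 1 q).mul (hasFDerivAt_apply 4 q))).add
      ((hasFDerivAt_apply (𝕜 := ℝ) 2 q).mul (hasFDerivAt_apply 5 q))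
  rw [pb_Ham_eq_fderiv _ k1 k2 k3 k4 hx hy hz, hD.fderiv]
  have hr := radius_ne_zero hx
  simp only [hamVectorField, add_apply, smul_apply, proj_apply, smul_eq_mul, Matrix.cons_val,
    Matrix.cons_val_zero, Matrix.cons_val_one, Fin.isValue]
  field_simp
  linear_combination (-k1 * q 0 ^ 2 * q 1 ^ 2 * q 2 ^ 2) * radius_sq q

theorem pb_const_div_sq_Ham (c k1 k2 k3 k4 : ℝ) {q : Pt} (hx : q 0 ≠ 0) (hy : q 1 ≠ 0)
    (hz : q 2 ≠ 0) :
    pb (fun p => c / p 0 ^ 2) (Ham k1 k2 k3 k4) q = -2 * c * q 3 / q 0 ^ 3 := by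
  rw [pb_Ham_eq_fderiv _ k1 k2 k3 k4 hx hy hz, (hasFDerivAt_const_div_sq_apply c 0 hx).fderiv]
  simp only [hamVectorField, smul_apply, proj_apply, smul_eq_mul, Matrix.cons_val_zero]
  ring

theorem pb_Rx_Ham (k1 k2 k3 k4 : ℝ) {q : Pt} (hx : q 0 ≠ 0) (hy : q 1 ≠ 0) (hz : q 2 ≠ 0) :
    pb (Rx k1 k2 k3 k4) (Ham k1 k2 k3 k4) q = 2 * k2 * dilation q / q 0 ^ 3 := by
  have hr := radius_ne_zero hx
  have h0 := hasFDerivAt_apply (𝕜 := ℝ) 0 q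
  have h1 := hasFDerivAt_apply (𝕜 := ℝ) 1 q
  have h2 := hasFDerivAt_apply (𝕜 := ℝ) 2 q
  have h3 := hasFDerivAt_apply (𝕜 := ℝ) 3 q
  have h4 := hasFDerivAt_apply (𝕜 := ℝ) 4 q
  have h5 := hasFDerivAt_apply (𝕜 := ℝ) 5 q
  have hU := (((hasFDerivAt_const_div_radius k1 hr).add
    (hasFDerivAt_const_div_sq_apply (2 * k2) 0 hx)).add
    (hasFDerivAt_const_div_sq_apply (2 * k3) 1 hy)).add
    (hasFDerivAt_const_div_sq_apply (2 * k4) 2 hz)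
  have hRx : HasFDerivAt (Rx k1 k2 k3 k4) _ q :=
    ((((h2.mul h3).sub (h0.mul h5)).mul h5).sub (((h0.mul h4).sub (h1.mul h3)).mul h4)).sub
      (h0.mul hU)
  rw [pb_Ham_eq_fderiv _ k1 k2 k3 k4 hx hy hz, hRx.fderiv]
  simp only [hamVectorField, dilation, show √(q 0 ^ 2 + q 1 ^ 2 + q 2 ^ 2) = radius q from rfl,
    Pi.sub_apply, Pi.mul_apply, sub_apply, add_apply, smul_apply, proj_apply, smul_eq_mul,
    Matrix.cons_val, Matrix.cons_val_zero, Matrix.cons_val_one, Fin.isValue]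
  field_simp
  linear_combination (-k1 * q 0 ^ 3 * q 1 ^ 3 * q 2 ^ 3 * q 3) * radius_sq q

theorem Rx_eq_dilation_mul_sub_pb (k1 k2 k3 k4 : ℝ) {q : Pt} (hx : q 0 ≠ 0) (hy : q 1 ≠ 0)
    (hz : q 2 ≠ 0) :
    Rx k1 k2 k3 k4 q = dilation q * q 3 - q 0 * pb dilation (Ham k1 k2 k3 k4) q := by
  rw [pb_dilation_Ham k1 k2 k3 k4 hx hy hz, Rx, dilation, radius]
  ring

theorem differentiableAt_Rx (k1 k2 k3 k4 : ℝ) {q : Pt} (hx : q 0 ≠ 0) (hy : q 1 ≠ 0)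
    (hz : q 2 ≠ 0) : DifferentiableAt ℝ (Rx k1 k2 k3 k4) q := by
  unfold Rx
  fun_prop (disch := positivity)

theorem stmt16_general (k1 k2 k3 k4 : ℝ) :
    ∀ q : Pt, q 0 ≠ 0 → q 1 ≠ 0 → q 2 ≠ 0 →
      pb (K4x k1 k2 k3 k4) (Ham k1 k2 k3 k4) q = 0 := by
  intro q hx hy hz
  have hRx := differentiableAt_Rx k1 k2 k3 k4 hx hy hz
  have hA : DifferentiableAt ℝ (fun p : Pt => 2 * k2 / p 0 ^ 2) q := by
    fun_prop (disch := positivity)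
  have hD : DifferentiableAt ℝ dilation q := by
    unfold dilation
    fun_prop
  change pb (fun p => Rx k1 k2 k3 k4 p ^ 2 + 2 * k2 / p 0 ^ 2 * dilation p ^ 2) _ q = 0
  rw [pb_add (hRx.fun_pow 2) (hA.fun_mul (hD.fun_pow 2)), pb_sq hRx, pb_mul hA (hD.fun_pow 2),
    pb_sq hD, pb_Rx_Ham k1 k2 k3 k4 hx hy hz, pb_const_div_sq_Ham _ k1 k2 k3 k4 hx hy hz,
    Rx_eq_dilation_mul_sub_pb k1 k2 k3 k4 hx hy hz]
  field_simp
  ring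

theorem stmt16 (k1 k2 k3 k4 : ℝ) (hk2 : k2 ≥ 0) :
    ∀ q : Pt, q 0 ≠ 0 → q 1 ≠ 0 → q 2 ≠ 0 →
      pb (K4x k1 k2 k3 k4) (Ham k1 k2 k3 k4) q = 0 :=
  stmt16_general k1 k2 k3 k4
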